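/- arXiv:2504.07910 — 2 statements merged into one kernel-verified Lean document; each statement's English description precedes it below -/
import Mathlib

section
/- Let ω be an alternating k-form on ℝ^n and V a linear subspace of ℝ^n. Then the k-alternating array representing the restriction of ω to V equals the orthogonal projection of the array representing ω onto the subspace V ⊗ ⋯ ⊗ V: I(ω|_{V×⋯×V}) = P_{V⊗⋯⊗V}(I(ω)). -/
open Finset

/-- Frobenius inner product of `k`-dimensional arrays on `ℝ^n`. -/
def frob {n k : ℕ} (A B : (Fin k → Fin n) → ℝ) : ℝ :=
  ∑ i : Fin k → Fin n, A i * B i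

/-- Tensor product array of vectors `v_1, …, v_k ∈ ℝ^n`. -/
def tensorArr {n k : ℕ} (v : Fin k → (Fin n → ℝ)) : (Fin k → Fin n) → ℝ :=
  fun i => ∏ j : Fin k, v j (i j)

/-- The `k`-fold tensor power `V ⊗ ⋯ ⊗ V` inside the arrays on `ℝ^n`. -/
def tensorSpan {n : ℕ} (V : Submodule ℝ (Fin n → ℝ)) (k : ℕ) :
    Submodule ℝ ((Fin k → Fin n) → ℝ) :=
  Submodule.span ℝ {A | ∃ v : Fin k → (Fin n → ℝ), (∀ j, v j ∈ V) ∧ A = tensorArr v}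

/-- An array is `k`-alternating if permuting its indices multiplies it by the
sign of the permutation. -/
def IsAlternatingArr {n k : ℕ} (W : (Fin k → Fin n) → ℝ) : Prop :=
  ∀ σ : Equiv.Perm (Fin k), ∀ i : Fin k → Fin n,
    W (i ∘ σ) = (Equiv.Perm.sign σ : ℤ) * W i

/-- The array representing the restriction of an alternating `k`-form `ω` on
`ℝ^n` to a subspace `V` is the orthogonal projection (with respect to the
Frobenius inner product) of the array representing `ω` onto `V ⊗ ⋯ ⊗ V`:
`I(ω|_V) = P_{V⊗⋯⊗V}(I(ω))`. The orthogonal projection is characterized by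
membership in `V ⊗ ⋯ ⊗ V` (part of the hypothesis on `W_V`) together with
orthogonality of `W − W_V` to `V ⊗ ⋯ ⊗ V` (the conclusion). -/
theorem stmt5 {n k : ℕ} (V : Submodule ℝ (Fin n → ℝ))
    (ω : (Fin n → ℝ) [⋀^Fin k]→ₗ[ℝ] ℝ)
    (W : (Fin k → Fin n) → ℝ)
    (hW : W ∈ tensorSpan (⊤ : Submodule ℝ (Fin n → ℝ)) k ∧ IsAlternatingArr W)
    (hWrep : ∀ v : Fin k → (Fin n → ℝ), ω v = frob W (tensorArr v))
    (WV : (Fin k → Fin n) → ℝ)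
    (hWV : WV ∈ tensorSpan V k ∧ IsAlternatingArr WV)
    (hWVrep : ∀ v : Fin k → V,
      ω (fun j => (v j : Fin n → ℝ)) = frob WV (tensorArr (fun j => (v j : Fin n → ℝ)))) :
    ∀ T ∈ tensorSpan V k, frob (fun i => W i - WV i) T = 0 := by
  intro T hT
  have key : ∀ T, frob (fun i => W i - WV i) T = frob W T - frob WV T := by
    intro T
    simp [frob, sub_mul, Finset.sum_sub_distrib]
  rw [key]
  induction hT using Submodule.span_induction with
  | mem A hA =>
      obtain ⟨v, hv, rfl⟩ := hA
      have h1 := hWrep v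
      have h2 := hWVrep (fun j => ⟨v j, hv j⟩)
      simp only at h2
      rw [← h1, ← h2]
      simp
  | zero => simp [frob]
  | add x y hx hy ihx ihy =>
      have hx' : ∀ A : (Fin k → Fin n) → ℝ, frob A (x + y) = frob A x + frob A y := by
        intro A; simp [frob, mul_add, Finset.sum_add_distrib]
      rw [hx' W, hx' WV]; linarith
  | smul c x hx ihx =>
      have hx' : ∀ A : (Fin k → Fin n) → ℝ, frob A (c • x) = c * frob A x := by
        intro A
        simp only [frob, Pi.smul_apply, smul_eq_mul, Finset.mul_sum]
        exact Finset.sum_congr rfl fun i _ => by ring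
      rw [hx' W, hx' WV]
      rw [sub_eq_zero] at ihx ⊢
      rw [ihx]
end

section
/- Spectral truncation error bound: let H be a symmetric positive semidefinite N' × N' real matrix with eigenvalues λ₁ ≥ λ₂ ≥ ⋯ ≥ λ_{N'} ≥ 0 and orthonormal eigenvectors b_1,...,b_{N'}. Fix a power p ≥ 1 and a block structure so that H^p(i,j) denotes a block of H^p, with H^p(i,j) = Σ_{l=1}^{N'} λ_l^p b_l(i) ⊗ b_l(j), where b_l(i) denotes the i-th block of b_l. For m ≤ N', define η_m(i) as the m×m matrix with entries √(λ_{l₁}^p)√(λ_{l₂}^p) ⟨b_{l₁}(i), b_{l₂}(i)⟩. Then (1/λ₁^{2p}) | ‖H^p(i,j)‖_F² − ⟨η_m(i), η_m(j)⟩_F | ≤ (λ_{m+1}/λ₁)^p ( (N')² − m² ), provided λ₁ > 0. -/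
open Finset

/-- Spectral truncation error bound: for a symmetric PSD matrix with
nonincreasing eigenvalues `λ_1 ≥ ⋯ ≥ λ_{N'} ≥ 0` and orthonormal eigenvectors
`b_1, …, b_{N'}` (each partitioned into `N` blocks of size `q`), power `p ≥ 1`,
blocks `H^p(i,j) = Σ_l λ_l^p b_l(i) ⊗ b_l(j)` and truncated embedding
`η_m(i) = (√(λ_{l₁}^p) √(λ_{l₂}^p) ⟨b_{l₁}(i), b_{l₂}(i)⟩)_{l₁,l₂ ≤ m}`,
one has
`(1/λ₁^{2p}) |‖H^p(i,j)‖_F² − ⟨η_m(i), η_m(j)⟩_F| ≤ (λ_{m+1}/λ₁)^p ((N')² − m²)`,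
provided `λ₁ > 0`. -/
theorem stmt13 (N' N q p m : ℕ) (hp : 1 ≤ p) (hN' : 0 < N') (hm : m < N')
    (lam : Fin N' → ℝ) (b : Fin N' → Fin N → Fin q → ℝ)
    (hmono : ∀ l l' : Fin N', l ≤ l' → lam l' ≤ lam l)
    (hnn : ∀ l, 0 ≤ lam l)
    (horth : ∀ l l' : Fin N',
      (∑ i : Fin N, ∑ r : Fin q, b l i r * b l' i r) = if l = l' then 1 else 0)
    (hpos : 0 < lam ⟨0, hN'⟩)
    (i j : Fin N) :
    (1 / lam ⟨0, hN'⟩ ^ (2 * p)) *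
        |(∑ r : Fin q, ∑ s : Fin q,
            (∑ l : Fin N', lam l ^ p * b l i r * b l j s) ^ 2) -
          ∑ l₁ : Fin m, ∑ l₂ : Fin m,
            (Real.sqrt (lam (Fin.castLE hm.le l₁) ^ p) *
                Real.sqrt (lam (Fin.castLE hm.le l₂) ^ p) *
                ∑ r : Fin q, b (Fin.castLE hm.le l₁) i r * b (Fin.castLE hm.le l₂) i r) *
              (Real.sqrt (lam (Fin.castLE hm.le l₁) ^ p) *
                Real.sqrt (lam (Fin.castLE hm.le l₂) ^ p) *
                ∑ r : Fin q, b (Fin.castLE hm.le l₁) j r * b (Fin.castLE hm.le l₂) j r)| ≤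
      (lam ⟨m, hm⟩ / lam ⟨0, hN'⟩) ^ p * ((N' : ℝ) ^ 2 - (m : ℝ) ^ 2) := by
  set Λ := lam ⟨0, hN'⟩ with hΛdef
  set μ := lam ⟨m, hm⟩ with hμdef
  have hΛnn : 0 ≤ Λ := hnn _
  have hμnn : 0 ≤ μ := hnn _
  have hlamΛ : ∀ l, lam l ≤ Λ := fun l => hmono _ l (by simp [Fin.le_def])
  have hμΛ : μ ≤ Λ := hlamΛ _
  -- each block has norm ≤ 1
  have hb1 : ∀ (l : Fin N') (k : Fin N), (∑ r, b l k r * b l k r) ≤ 1 := by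
    intro l k
    have h := horth l l
    simp only [if_pos rfl] at h
    calc (∑ r, b l k r * b l k r) ≤ ∑ i : Fin N, ∑ r, b l i r * b l i r :=
          Finset.single_le_sum (f := fun i => ∑ r, b l i r * b l i r)
            (fun i _ => Finset.sum_nonneg fun r _ => mul_self_nonneg _) (mem_univ k)
      _ = 1 := h
  have hS : ∀ (l₁ l₂ : Fin N') (k : Fin N), |∑ r, b l₁ k r * b l₂ k r| ≤ 1 := by
    intro l₁ l₂ k
    rw [← sq_le_one_iff_abs_le_one]
    have cs := Finset.sum_mul_sq_le_sq_mul_sq Finset.univ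
      (fun r => b l₁ k r) (fun r => b l₂ k r)
    have h1 := hb1 l₁ k
    have h2 := hb1 l₂ k
    simp only [sq] at cs ⊢
    nlinarith [Finset.sum_nonneg (s := (univ : Finset (Fin q)))
        (f := fun r => b l₁ k r * b l₁ k r) fun r _ => mul_self_nonneg _,
      Finset.sum_nonneg (s := (univ : Finset (Fin q)))
        (f := fun r => b l₂ k r * b l₂ k r) fun r _ => mul_self_nonneg _]
  set A : Fin N' → Fin N' → ℝ := fun l₁ l₂ =>
    lam l₁ ^ p * lam l₂ ^ p * (∑ r, b l₁ i r * b l₂ i r) * (∑ r, b l₁ j r * b l₂ j r)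
    with hA
  -- term-wise bound
  have hAbound : ∀ l₁ l₂ : Fin N', m ≤ (l₁ : ℕ) ∨ m ≤ (l₂ : ℕ) →
      |A l₁ l₂| ≤ μ ^ p * Λ ^ p := by
    intro l₁ l₂ hl
    have hpow : lam l₁ ^ p * lam l₂ ^ p ≤ μ ^ p * Λ ^ p := by
      rcases hl with hl | hl
      · have h1 : lam l₁ ≤ μ := hmono _ l₁ (by simpa [Fin.le_def] using hl)
        exact mul_le_mul (pow_le_pow_left₀ (hnn _) h1 p)
          (pow_le_pow_left₀ (hnn _) (hlamΛ _) p) (pow_nonneg (hnn _) p)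
          (pow_nonneg hμnn p)
      · have h1 : lam l₂ ≤ μ := hmono _ l₂ (by simpa [Fin.le_def] using hl)
        calc lam l₁ ^ p * lam l₂ ^ p ≤ Λ ^ p * μ ^ p :=
              mul_le_mul (pow_le_pow_left₀ (hnn _) (hlamΛ _) p)
                (pow_le_pow_left₀ (hnn _) h1 p) (pow_nonneg (hnn _) p)
                (pow_nonneg hΛnn p)
          _ = μ ^ p * Λ ^ p := mul_comm _ _
    have hnn1 : (0:ℝ) ≤ lam l₁ ^ p * lam l₂ ^ p :=
      mul_nonneg (pow_nonneg (hnn _) p) (pow_nonneg (hnn _) p)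
    calc |A l₁ l₂| = lam l₁ ^ p * lam l₂ ^ p * (|∑ r, b l₁ i r * b l₂ i r| *
            |∑ r, b l₁ j r * b l₂ j r|) := by
          rw [hA]; simp only []
          rw [abs_mul, abs_mul, abs_of_nonneg hnn1, mul_assoc]
      _ ≤ lam l₁ ^ p * lam l₂ ^ p * 1 := by
          refine mul_le_mul_of_nonneg_left ?_ hnn1
          calc |∑ r, b l₁ i r * b l₂ i r| * |∑ r, b l₁ j r * b l₂ j r|
              ≤ 1 * 1 := mul_le_mul (hS _ _ _) (hS _ _ _) (abs_nonneg _) zero_le_one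
            _ = 1 := one_mul 1
      _ ≤ μ ^ p * Λ ^ p := by rw [mul_one]; exact hpow
  -- expansion of the Frobenius norm
  have h4 : ∀ f : Fin q → Fin q → Fin N' → Fin N' → ℝ,
      (∑ r, ∑ s, ∑ a, ∑ c, f r s a c) = ∑ a, ∑ c, ∑ r, ∑ s, f r s a c := by
    intro f
    refine (Finset.sum_congr rfl fun r _ => Finset.sum_comm).trans ?_
    refine Finset.sum_comm.trans ?_
    refine Finset.sum_congr rfl fun a _ => ?_
    exact (Finset.sum_congr rfl fun r _ => Finset.sum_comm).trans Finset.sum_comm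
  have expand : (∑ r : Fin q, ∑ s : Fin q,
      (∑ l : Fin N', lam l ^ p * b l i r * b l j s) ^ 2) = ∑ a, ∑ c, A a c := by
    simp_rw [sq, Finset.sum_mul_sum]
    rw [h4 fun r s a c => (lam a ^ p * b a i r * b a j s) * (lam c ^ p * b c i r * b c j s)]
    refine Finset.sum_congr rfl fun a _ => Finset.sum_congr rfl fun c _ => ?_
    rw [hA]
    simp only [Finset.sum_mul, Finset.mul_sum]
    rw [Finset.sum_comm]
    exact Finset.sum_congr rfl fun r _ => Finset.sum_congr rfl fun s _ => by ring
  -- truncated sum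
  have trunc : (∑ l₁ : Fin m, ∑ l₂ : Fin m,
      (Real.sqrt (lam (Fin.castLE hm.le l₁) ^ p) *
          Real.sqrt (lam (Fin.castLE hm.le l₂) ^ p) *
          ∑ r : Fin q, b (Fin.castLE hm.le l₁) i r * b (Fin.castLE hm.le l₂) i r) *
        (Real.sqrt (lam (Fin.castLE hm.le l₁) ^ p) *
          Real.sqrt (lam (Fin.castLE hm.le l₂) ^ p) *
          ∑ r : Fin q, b (Fin.castLE hm.le l₁) j r * b (Fin.castLE hm.le l₂) j r))
      = ∑ l₁ : Fin m, ∑ l₂ : Fin m, A (Fin.castLE hm.le l₁) (Fin.castLE hm.le l₂) := by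
    refine Finset.sum_congr rfl fun l₁ _ => Finset.sum_congr rfl fun l₂ _ => ?_
    rw [hA]
    have e1 : Real.sqrt (lam (Fin.castLE hm.le l₁) ^ p) *
        Real.sqrt (lam (Fin.castLE hm.le l₁) ^ p) = lam (Fin.castLE hm.le l₁) ^ p :=
      Real.mul_self_sqrt (pow_nonneg (hnn _) p)
    have e2 : Real.sqrt (lam (Fin.castLE hm.le l₂) ^ p) *
        Real.sqrt (lam (Fin.castLE hm.le l₂) ^ p) = lam (Fin.castLE hm.le l₂) ^ p :=
      Real.mul_self_sqrt (pow_nonneg (hnn _) p)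
    calc (Real.sqrt (lam (Fin.castLE hm.le l₁) ^ p) *
          Real.sqrt (lam (Fin.castLE hm.le l₂) ^ p) *
          ∑ r : Fin q, b (Fin.castLE hm.le l₁) i r * b (Fin.castLE hm.le l₂) i r) *
        (Real.sqrt (lam (Fin.castLE hm.le l₁) ^ p) *
          Real.sqrt (lam (Fin.castLE hm.le l₂) ^ p) *
          ∑ r : Fin q, b (Fin.castLE hm.le l₁) j r * b (Fin.castLE hm.le l₂) j r)
        = (Real.sqrt (lam (Fin.castLE hm.le l₁) ^ p) *
            Real.sqrt (lam (Fin.castLE hm.le l₁) ^ p)) *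
          (Real.sqrt (lam (Fin.castLE hm.le l₂) ^ p) *
            Real.sqrt (lam (Fin.castLE hm.le l₂) ^ p)) *
          (∑ r : Fin q, b (Fin.castLE hm.le l₁) i r * b (Fin.castLE hm.le l₂) i r) *
          (∑ r : Fin q, b (Fin.castLE hm.le l₁) j r * b (Fin.castLE hm.le l₂) j r) := by
          ring
      _ = _ := by rw [e1, e2]
  rw [expand, trunc]
  -- convert truncated sum to a sum over a subset
  set S : Finset (Fin N') := Finset.univ.map (Fin.castLEEmb hm.le) with hSdef
  have hSmem : ∀ l : Fin N', l ∈ S ↔ (l : ℕ) < m := by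
    intro l
    simp only [hSdef, Finset.mem_map, Finset.mem_univ, true_and, Fin.castLEEmb_apply]
    constructor
    · rintro ⟨a, rfl⟩; exact a.isLt
    · intro h; exact ⟨⟨l, h⟩, Fin.ext rfl⟩
  have htr : (∑ l₁ : Fin m, ∑ l₂ : Fin m, A (Fin.castLE hm.le l₁) (Fin.castLE hm.le l₂))
      = ∑ x ∈ S ×ˢ S, A x.1 x.2 := by
    rw [Finset.sum_product, hSdef]
    simp only [Finset.sum_map, Fin.castLEEmb_apply]
  rw [htr]
  have hfull : (∑ a, ∑ c, A a c) = ∑ x ∈ (univ : Finset (Fin N' × Fin N')), A x.1 x.2 := by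
    rw [← Finset.univ_product_univ, Finset.sum_product]
  rw [hfull]
  have hsub : S ×ˢ S ⊆ (univ : Finset (Fin N' × Fin N')) := Finset.subset_univ _
  rw [← Finset.sum_sdiff_eq_sub hsub]
  -- cardinality
  have hcard : ((univ : Finset (Fin N' × Fin N')) \ S ×ˢ S).card = N' * N' - m * m := by
    rw [Finset.card_sdiff_of_subset hsub, Finset.card_product]
    simp [hSdef]
  have habs : |∑ x ∈ (univ : Finset (Fin N' × Fin N')) \ S ×ˢ S, A x.1 x.2|
      ≤ μ ^ p * Λ ^ p * ((N' : ℝ) ^ 2 - (m : ℝ) ^ 2) := by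
    calc |∑ x ∈ (univ : Finset (Fin N' × Fin N')) \ S ×ˢ S, A x.1 x.2|
        ≤ ∑ x ∈ (univ : Finset (Fin N' × Fin N')) \ S ×ˢ S, |A x.1 x.2| :=
          Finset.abs_sum_le_sum_abs _ _
      _ ≤ ∑ _x ∈ (univ : Finset (Fin N' × Fin N')) \ S ×ˢ S, μ ^ p * Λ ^ p := by
          refine Finset.sum_le_sum fun x hx => ?_
          rw [Finset.mem_sdiff, Finset.mem_product] at hx
          refine hAbound _ _ ?_
          by_contra hcon
          push_neg at hcon
          exact hx.2 ⟨(hSmem _).mpr hcon.1, (hSmem _).mpr hcon.2⟩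
      _ = ((univ : Finset (Fin N' × Fin N')) \ S ×ˢ S).card * (μ ^ p * Λ ^ p) := by
          rw [Finset.sum_const, nsmul_eq_mul]
      _ = μ ^ p * Λ ^ p * ((N' : ℝ) ^ 2 - (m : ℝ) ^ 2) := by
          rw [hcard]
          have hmm : m * m ≤ N' * N' := Nat.mul_le_mul hm.le hm.le
          rw [Nat.cast_sub hmm]
          push_cast
          ring
  have hΛp : (0:ℝ) < Λ ^ p := pow_pos hpos p
  have hC : (0:ℝ) ≤ (N' : ℝ) ^ 2 - (m : ℝ) ^ 2 := by
    have : (m : ℝ) ≤ (N' : ℝ) := by exact_mod_cast hm.le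
    nlinarith [Nat.cast_nonneg (α := ℝ) m]
  calc (1 / Λ ^ (2 * p)) * |∑ x ∈ (univ : Finset (Fin N' × Fin N')) \ S ×ˢ S, A x.1 x.2|
      ≤ (1 / Λ ^ (2 * p)) * (μ ^ p * Λ ^ p * ((N' : ℝ) ^ 2 - (m : ℝ) ^ 2)) := by
        refine mul_le_mul_of_nonneg_left habs ?_
        positivity
    _ = (μ / Λ) ^ p * ((N' : ℝ) ^ 2 - (m : ℝ) ^ 2) := by
        rw [div_pow]
        rw [two_mul, pow_add]
        field_simp
end
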